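/- Let A, C ∈ ℝ^{n×n}, r ≥ ε ≥ 0, let Θ, λ > 0 satisfy |exp(At)| ≤ Θ e^{−λt} for all t ≥ 0, let d, q : [0,∞) → [−1,1] be measurable, and let x be a solution of system (2.12). Define v(t) := x(t−r) − x(t−r−εd(t)) for t ≥ 0. Then for every σ ∈ (0, λ) and every t ≥ 0: max_{0 ≤ s ≤ t} (e^{σs} |x(s)|) ≤ Θ |x(0)| + (Θ|C| / (λ−σ)) · sup_{0 ≤ s ≤ t} (e^{σs} |v(s)|). -/

import Mathlib

open MeasureTheory

/-- Matrix-vector multiplication between Euclidean spaces. -/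
noncomputable def mv {n m : ℕ} (A : Matrix (Fin n) (Fin m) ℝ)
    (x : EuclideanSpace ℝ (Fin m)) : EuclideanSpace ℝ (Fin n) :=
  Matrix.toEuclideanLin A x

/-- Operator norm of a matrix induced by the Euclidean vector norms. -/
noncomputable def opNorm {n m : ℕ} (A : Matrix (Fin n) (Fin m) ℝ) : ℝ :=
  ‖LinearMap.toContinuousLinearMap (Matrix.toEuclideanLin A)‖

/-- `mexp A t = exp (t A)`, the matrix exponential. -/
noncomputable def mexp {n : ℕ} (A : Matrix (Fin n) (Fin n) ℝ) (t : ℝ) :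
    Matrix (Fin n) (Fin n) ℝ :=
  NormedSpace.exp (t • A)

/-!
Treat the delayed term `f s = q s • C (x (s - r - ε d s) - x (s - r))` as a forcing with
`‖f s‖ ≤ ‖C‖ ‖v s‖`. The solution then obeys the variation of constants formula
`x τ = exp (τ A) x 0 + ∫₀^τ exp ((τ - u) A) f u du`; since `x` is only absolutely continuous,
this is proved by showing that `u ↦ exp ((τ - u) A) x u - ∫₀^u exp ((τ - s) A) f s ds` is
Lipschitz with derivative zero almost everywhere. With `S` the weighted supremum of `‖v‖`,
`‖f u‖ ≤ ‖C‖ S e^{-σu}`, and `e^{στ} ∫₀^τ e^{-λ(τ-u)} e^{-σu} du ≤ 1 / (λ - σ)` gives the bound.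
-/

open Set
open scoped NNReal

section Lipschitz

variable {α 𝕜 E F : Type*} [PseudoMetricSpace α] [NontriviallyNormedField 𝕜]
  [SeminormedAddCommGroup E] [NormedSpace 𝕜 E] [SeminormedAddCommGroup F] [NormedSpace 𝕜 F]

theorem LipschitzOnWith.clm_apply {s : Set α} {B : α → E →L[𝕜] F} {X : α → E}
    {KB KX MB MX : ℝ≥0} (hB : LipschitzOnWith KB B s) (hX : LipschitzOnWith KX X s)
    (hBM : ∀ u ∈ s, ‖B u‖ ≤ MB) (hXM : ∀ u ∈ s, ‖X u‖ ≤ MX) :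
    LipschitzOnWith (KB * MX + MB * KX) (fun u => B u (X u)) s := by
  refine LipschitzOnWith.of_dist_le_mul fun u hu v hv => ?_
  have hsplit : B u (X u) - B v (X v) = (B u - B v) (X u) + B v (X u - X v) := by
    simp only [sub_apply, map_sub]; abel
  calc dist (B u (X u)) (B v (X v))
      ≤ ‖B u - B v‖ * ‖X u‖ + ‖B v‖ * ‖X u - X v‖ := by
        rw [dist_eq_norm, hsplit]
        exact (norm_add_le _ _).trans (add_le_add ((B u - B v).le_opNorm _) ((B v).le_opNorm _))
    _ ≤ KB * dist u v * MX + MB * (KX * dist u v) := by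
        rw [← dist_eq_norm, ← dist_eq_norm]
        gcongr
        exacts [hB.dist_le_mul u hu v hv, hXM u hu, hBM v hv, hX.dist_le_mul u hu v hv]
    _ = ↑(KB * MX + MB * KX) * dist u v := by push_cast; ring

end Lipschitz

theorem lipschitzOnWith_intervalIntegral {E : Type*} [NormedAddCommGroup E] [NormedSpace ℝ E]
    {g : ℝ → E} {a b : ℝ} {M : ℝ≥0}
    (hg : IntegrableOn g (Ioc a b)) (hM : ∀ u ∈ Ioc a b, ‖g u‖ ≤ M) :
    LipschitzOnWith M (fun u => ∫ s in a..u, g s) (Icc a b) := by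
  have hint : ∀ w ∈ Icc a b, IntervalIntegrable g volume a w := fun w hw =>
    (intervalIntegrable_iff_integrableOn_Ioc_of_le hw.1).2
      (hg.mono_set (Ioc_subset_Ioc_right hw.2))
  refine LipschitzOnWith.of_dist_le_mul fun u hu v hv => ?_
  rw [dist_eq_norm, intervalIntegral.integral_interval_sub_left (hint u hu) (hint v hv),
    Real.dist_eq]
  refine intervalIntegral.norm_integral_le_of_norm_le_const fun w hw => hM w ⟨?_, ?_⟩
  · exact lt_of_le_of_lt (le_min hv.1 hu.1) hw.1
  · exact hw.2.trans (max_le hv.2 hu.2)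

section VariationOfConstants

variable {E : Type*} [NormedAddCommGroup E] [NormedSpace ℝ E] [CompleteSpace E]

theorem hasDerivAt_exp_sub_smul_apply (B : E →L[ℝ] E) (τ : ℝ) {Z : ℝ → E} {z' : E} {u : ℝ}
    (hZ : HasDerivAt Z z' u) :
    HasDerivAt (fun s => NormedSpace.exp ((τ - s) • B) (Z s))
      (NormedSpace.exp ((τ - u) • B) (z' - B (Z u))) u := by
  have he : HasDerivAt (fun s : ℝ => NormedSpace.exp ((τ - s) • B))
      (-(NormedSpace.exp ((τ - u) • B) * B)) u := by
    have h := (hasDerivAt_exp_smul_const B (τ - u)).scomp u ((hasDerivAt_id u).const_sub τ)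
    rwa [neg_one_smul] at h
  convert he.clm_apply hZ using 1
  simp only [map_sub, neg_apply, mul_apply_eq_comp]
  abel

theorem exists_lipschitzOnWith_exp_sub_smul (B : E →L[ℝ] E) (τ a b : ℝ) :
    ∃ K, LipschitzOnWith K (fun s : ℝ => NormedSpace.exp ((τ - s) • B)) (Icc a b) := by
  have hcd : ContDiff ℝ 1 (fun s : ℝ => NormedSpace.exp ((τ - s) • B)) := by
    refine contDiff_iff_contDiffAt.2 fun s => ?_
    exact (NormedSpace.exp_analytic ((τ - s) • B)).contDiffAt.comp s (by fun_prop)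
  exact hcd.contDiffOn.exists_lipschitzOnWith one_ne_zero (convex_Icc a b) isCompact_Icc

theorem variation_of_constants_of_ae_hasDerivAt (B : E →L[ℝ] E) {Z g : ℝ → E} {τ : ℝ}
    (hτ : 0 ≤ τ) {KZ : ℝ≥0} (hZ : LipschitzOnWith KZ Z (Icc 0 τ))
    (hg : AEStronglyMeasurable g (volume.restrict (Ioc 0 τ))) {M : ℝ}
    (hgM : ∀ u ∈ Ioc 0 τ, ‖g u‖ ≤ M)
    (hZ' : ∀ᵐ u, u ∈ Icc 0 τ → HasDerivAt Z (B (Z u) + g u) u) :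
    Z τ = NormedSpace.exp (τ • B) (Z 0)
      + ∫ u in 0..τ, NormedSpace.exp ((τ - u) • B) (g u) := by
  set e : ℝ → E →L[ℝ] E := fun u => NormedSpace.exp ((τ - u) • B)
  obtain ⟨Ke, he_lip⟩ := exists_lipschitzOnWith_exp_sub_smul B τ 0 τ
  obtain ⟨MZ, hMZ⟩ := isCompact_Icc.exists_bound_of_continuousOn hZ.continuousOn
  obtain ⟨Me, hMe⟩ := isCompact_Icc.exists_bound_of_continuousOn he_lip.continuousOn
  have hegM : ∀ u ∈ Ioc 0 τ, ‖e u (g u)‖ ≤ Me * M := fun u hu =>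
    ((e u).le_opNorm _).trans (mul_le_mul (hMe u (Ioc_subset_Icc_self hu)) (hgM u hu)
      (norm_nonneg _) ((norm_nonneg _).trans (hMe u (Ioc_subset_Icc_self hu))))
  have heg : IntegrableOn (fun u => e u (g u)) (Ioc 0 τ) :=
    Integrable.of_bound (isBoundedBilinearMap_apply.continuous.comp_aestronglyMeasurable
        ((he_lip.continuousOn.mono Ioc_subset_Icc_self).aestronglyMeasurable
          measurableSet_Ioc |>.prodMk hg)) _
      (ae_restrict_of_forall_mem measurableSet_Ioc hegM)
  set J : ℝ → E := fun u => ∫ s in 0..u, e s (g s)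
  -- `Y τ = Y 0` is the variation of constants formula.
  set Y : ℝ → E := fun u => e u (Z u) - J u
  obtain ⟨K, hY_lip⟩ : ∃ K, LipschitzOnWith K Y (uIcc 0 τ) := by
    rw [uIcc_of_le hτ]
    exact ⟨_, (he_lip.clm_apply hZ (MB := Me.toNNReal) (MX := MZ.toNNReal)
      (fun u hu => (hMe u hu).trans (Real.le_coe_toNNReal _))
      (fun u hu => (hMZ u hu).trans (Real.le_coe_toNNReal _))).sub
      (lipschitzOnWith_intervalIntegral heg (M := (Me * M).toNNReal)
        fun u hu => (hegM u hu).trans (Real.le_coe_toNNReal _))⟩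
  have hY' : ∀ᵐ u, u ∈ uIcc 0 τ → HasDerivAt Y 0 u := by
    filter_upwards [hZ', ((intervalIntegrable_iff_integrableOn_Ioc_of_le hτ).2
      heg).ae_hasDerivAt_integral] with u hZu hJu hu
    convert (hasDerivAt_exp_sub_smul_apply B τ (hZu (uIcc_of_le hτ ▸ hu))).fun_sub
      (hJu hu 0 left_mem_uIcc) using 1
    rw [add_sub_cancel_left, sub_self]
  obtain ⟨c, hc⟩ := hY_lip.absolutelyContinuousOnInterval.const_of_ae_hasDerivAt_zero hY'
  have hY0τ := hc τ right_mem_uIcc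
  rw [← hc 0 left_mem_uIcc] at hY0τ
  simp only [Y, e, J, sub_self, zero_smul, NormedSpace.exp_zero, sub_zero,
    intervalIntegral.integral_same] at hY0τ
  exact sub_eq_iff_eq_add.1 hY0τ

theorem variation_of_constants (B : E →L[ℝ] E) {X g : ℝ → E} {τ : ℝ} (hτ : 0 ≤ τ)
    (hg : AEStronglyMeasurable g (volume.restrict (Ioc 0 τ))) {M : ℝ}
    (hgM : ∀ u ∈ Ioc 0 τ, ‖g u‖ ≤ M) (hX : ContinuousOn X (Icc 0 τ))
    (hXeq : ∀ s ∈ Icc 0 τ, X s = X 0 + ∫ u in 0..s, (B (X u) + g u)) :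
    X τ = NormedSpace.exp (τ • B) (X 0)
      + ∫ u in 0..τ, NormedSpace.exp ((τ - u) • B) (g u) := by
  set G : ℝ → E := fun u => B (X u) + g u
  obtain ⟨MX, hMX⟩ := isCompact_Icc.exists_bound_of_continuousOn hX
  have hGM : ∀ u ∈ Ioc 0 τ, ‖G u‖ ≤ ‖B‖ * MX + M := fun u hu =>
    (norm_add_le _ _).trans <| add_le_add
      ((B.le_opNorm _).trans (by gcongr; exact hMX u (Ioc_subset_Icc_self hu))) (hgM u hu)
  have hG : IntegrableOn G (Ioc 0 τ) :=
    Integrable.of_bound ((B.continuous.comp_aestronglyMeasurable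
        ((hX.mono Ioc_subset_Icc_self).aestronglyMeasurable measurableSet_Ioc)).add hg) _
      (ae_restrict_of_forall_mem measurableSet_Ioc hGM)
  set Z : ℝ → E := fun u => X 0 + ∫ s in 0..u, G s
  have hZX : ∀ u ∈ Icc 0 τ, Z u = X u := fun u hu => (hXeq u hu).symm
  have hZ : LipschitzOnWith _ Z (Icc 0 τ) :=
    (LipschitzWith.const (X 0)).lipschitzOnWith.add (lipschitzOnWith_intervalIntegral hG
      (M := (‖B‖ * MX + M).toNNReal) fun u hu => (hGM u hu).trans (Real.le_coe_toNNReal _))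
  have hZ' : ∀ᵐ u, u ∈ Icc 0 τ → HasDerivAt Z (B (Z u) + g u) u := by
    filter_upwards [((intervalIntegrable_iff_integrableOn_Ioc_of_le hτ).2
      hG).ae_hasDerivAt_integral] with u hGu hu
    rw [hZX u hu]
    exact (hGu (uIcc_of_le hτ ▸ hu) 0 left_mem_uIcc).const_add (X 0)
  have h := variation_of_constants_of_ae_hasDerivAt B hτ hZ hg hgM hZ'
  rwa [hZX τ ⟨hτ, le_rfl⟩, hZX 0 ⟨le_rfl, hτ⟩] at h

end VariationOfConstants

theorem integral_exp_mul_sub_mul_exp (lam σ τ : ℝ) (h : σ ≠ lam) :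
    ∫ u in 0..τ, Real.exp (-lam * (τ - u)) * Real.exp (-σ * u)
      = (Real.exp (-σ * τ) - Real.exp (-lam * τ)) / (lam - σ) := by
  have hne : lam - σ ≠ 0 := sub_ne_zero.2 h.symm
  have hF : ∀ u ∈ uIcc 0 τ, HasDerivAt
      (fun u => Real.exp (-lam * τ + (lam - σ) * u) / (lam - σ))
      (Real.exp (-lam * (τ - u)) * Real.exp (-σ * u)) u := by
    intro u _
    refine ((((hasDerivAt_id u).const_mul (lam - σ)).const_add (-lam * τ)).exp.div_const
      (lam - σ)).congr_deriv ?_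
    rw [← Real.exp_add, id, mul_one, mul_div_cancel_right₀ _ hne]
    ring_nf
  rw [intervalIntegral.integral_eq_sub_of_hasDerivAt hF
    (Continuous.intervalIntegrable (by fun_prop) _ _), ← sub_div]
  ring_nf

section WeightedEstimate

variable {E : Type*} [NormedAddCommGroup E] [NormedSpace ℝ E]

theorem norm_integral_exp_sub_smul_apply_le (B : E →L[ℝ] E) {Θ lam σ K τ : ℝ}
    (hΘ : 0 ≤ Θ) (hσ : σ ≠ lam) (hτ : 0 ≤ τ)
    (hdecay : ∀ t, 0 ≤ t → ‖NormedSpace.exp (t • B)‖ ≤ Θ * Real.exp (-lam * t))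
    {g : ℝ → E} (hg : ∀ u ∈ Ioc 0 τ, ‖g u‖ ≤ K * Real.exp (-σ * u)) :
    ‖∫ u in 0..τ, NormedSpace.exp ((τ - u) • B) (g u)‖
      ≤ Θ * K * ((Real.exp (-σ * τ) - Real.exp (-lam * τ)) / (lam - σ)) := by
  rw [← integral_exp_mul_sub_mul_exp lam σ τ hσ, ← intervalIntegral.integral_const_mul]
  refine intervalIntegral.norm_integral_le_of_norm_le hτ (.of_forall fun u hu => ?_)
    (Continuous.intervalIntegrable (by fun_prop) _ _)
  calc ‖NormedSpace.exp ((τ - u) • B) (g u)‖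
      ≤ (Θ * Real.exp (-lam * (τ - u))) * (K * Real.exp (-σ * u)) :=
        (ContinuousLinearMap.le_opNorm _ _).trans
          (mul_le_mul (hdecay _ (sub_nonneg.2 hu.2)) (hg u hu) (norm_nonneg _) (by positivity))
    _ = Θ * K * (Real.exp (-lam * (τ - u)) * Real.exp (-σ * u)) := by ring

theorem exp_mul_norm_exp_smul_add_integral_le (B : E →L[ℝ] E) {Θ lam σ K τ : ℝ}
    (hΘ : 0 ≤ Θ) (hσ : σ < lam) (hK : 0 ≤ K) (hτ : 0 ≤ τ)
    (hdecay : ∀ t, 0 ≤ t → ‖NormedSpace.exp (t • B)‖ ≤ Θ * Real.exp (-lam * t))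
    (y : E) {g : ℝ → E} (hg : ∀ u ∈ Ioc 0 τ, ‖g u‖ ≤ K * Real.exp (-σ * u)) :
    Real.exp (σ * τ) * ‖NormedSpace.exp (τ • B) y
        + ∫ u in 0..τ, NormedSpace.exp ((τ - u) • B) (g u)‖
      ≤ Θ * ‖y‖ + Θ * K / (lam - σ) := by
  have hfree : ‖NormedSpace.exp (τ • B) y‖ ≤ Θ * Real.exp (-lam * τ) * ‖y‖ :=
    ((NormedSpace.exp (τ • B)).le_opNorm y).trans (by gcongr; exact hdecay τ hτ)
  have hforced := norm_integral_exp_sub_smul_apply_le B hΘ hσ.ne hτ hdecay hg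
  set a := Real.exp ((σ - lam) * τ) with ha_def
  have ha : a ≤ 1 := Real.exp_le_one_iff.2 (mul_nonpos_of_nonpos_of_nonneg (by linarith) hτ)
  have hσlam : Real.exp (σ * τ) * Real.exp (-lam * τ) = a := by
    rw [ha_def, ← Real.exp_add]; ring_nf
  have hσσ : Real.exp (σ * τ) * Real.exp (-σ * τ) = 1 := by rw [← Real.exp_add]; ring_nf; simp
  calc Real.exp (σ * τ) * ‖NormedSpace.exp (τ • B) y
        + ∫ u in 0..τ, NormedSpace.exp ((τ - u) • B) (g u)‖
      ≤ Real.exp (σ * τ) * (Θ * Real.exp (-lam * τ) * ‖y‖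
          + Θ * K * ((Real.exp (-σ * τ) - Real.exp (-lam * τ)) / (lam - σ))) := by
        gcongr; exact (norm_add_le _ _).trans (add_le_add hfree hforced)
    _ = a * (Θ * ‖y‖) + Θ * K * (1 - a) / (lam - σ) := by
        rw [← hσlam, ← hσσ]; ring
    _ ≤ Θ * ‖y‖ + Θ * K / (lam - σ) := by
        refine add_le_add (mul_le_of_le_one_left (by positivity) ha) ?_
        refine div_le_div_of_nonneg_right (mul_le_of_le_one_right (by positivity) ?_)
          (sub_pos.2 hσ).le
        linarith [Real.exp_pos ((σ - lam) * τ)]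

end WeightedEstimate

theorem ContinuousOn.aestronglyMeasurable_comp_of_le {α E : Type*} [MeasurableSpace α]
    [TopologicalSpace E] {μ : Measure α} {x : ℝ → E} {a : ℝ} (hx : ContinuousOn x (Ici a))
    {φ : α → ℝ} (hφ : Measurable φ) {s : Set α} (hs : MeasurableSet s)
    (hφs : ∀ u ∈ s, a ≤ φ u) :
    AEStronglyMeasurable (fun u => x (φ u)) (μ.restrict s) := by
  have hclamp : Continuous fun y => x (max y a) :=
    hx.comp_continuous (continuous_id.max continuous_const) fun y => le_max_right y a
  refine (hclamp.comp_aestronglyMeasurable hφ.aestronglyMeasurable).congr ?_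
  filter_upwards [ae_restrict_mem hs] with u hu
  simp only [max_eq_left (hφs u hu)]

theorem sub_sub_mul_mem_Icc {r ε δ : ℝ} (s : ℝ) (hε : 0 ≤ ε) (hεr : ε ≤ r)
    (hδ : δ ∈ Icc (-1) 1) : s - r - ε * δ ∈ Icc (s - (r + ε)) s := by
  constructor <;> nlinarith [hδ.1, hδ.2]

section DelayedDifference

variable {E : Type*} [NormedAddCommGroup E] {r ε : ℝ} {d : ℝ → ℝ} {x : ℝ → E}

theorem exists_bound_delayed_difference (hε : 0 ≤ ε) (hεr : ε ≤ r)
    (hd1 : ∀ t, 0 ≤ t → d t ∈ Icc (-1 : ℝ) 1) (hxc : ContinuousOn x (Ici (-(r + ε))))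
    (t : ℝ) : ∃ M, ∀ s ∈ Icc 0 t, ‖x (s - r) - x (s - r - ε * d s)‖ ≤ M := by
  obtain ⟨M, hM⟩ := isCompact_Icc.exists_bound_of_continuousOn
    (hxc.mono (Icc_subset_Ici_self : Icc (-(r + ε)) t ⊆ _))
  refine ⟨M + M, fun s hs => (norm_sub_le _ _).trans (add_le_add (hM _ ?_) (hM _ ?_))⟩
  · constructor <;> linarith [hs.1, hs.2]
  · have h := sub_sub_mul_mem_Icc s hε hεr (hd1 s hs.1)
    constructor <;> linarith [h.1, h.2, hs.1, hs.2]

theorem aestronglyMeasurable_delayed_difference [NormedSpace ℝ E] (hε : 0 ≤ ε) (hεr : ε ≤ r)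
    (hd : Measurable d) (hd1 : ∀ t, 0 ≤ t → d t ∈ Icc (-1 : ℝ) 1)
    (hxc : ContinuousOn x (Ici (-(r + ε)))) (τ : ℝ) :
    AEStronglyMeasurable (fun s => x (s - r - ε * d s) - x (s - r))
      (volume.restrict (Ioc 0 τ)) := by
  refine (hxc.aestronglyMeasurable_comp_of_le (by fun_prop) measurableSet_Ioc fun u hu => ?_).sub
    (hxc.aestronglyMeasurable_comp_of_le (by fun_prop) measurableSet_Ioc fun u hu => ?_)
  · linarith [(sub_sub_mul_mem_Icc u hε hεr (hd1 u hu.1.le)).1, hu.1]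
  · linarith [hu.1]

end DelayedDifference

theorem norm_le_sSup_exp_mul_norm_mul_exp {E : Type*} [NormedAddCommGroup E] {v : ℝ → E}
    {σ t M : ℝ} (hσ : 0 ≤ σ) (hM : ∀ s ∈ Icc 0 t, ‖v s‖ ≤ M) {s : ℝ} (hs : s ∈ Icc 0 t) :
    ‖v s‖ ≤ sSup ((fun s => Real.exp (σ * s) * ‖v s‖) '' Icc 0 t) * Real.exp (-σ * s) := by
  have hbdd : BddAbove ((fun s => Real.exp (σ * s) * ‖v s‖) '' Icc 0 t) := by
    refine ⟨Real.exp (σ * t) * M, ?_⟩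
    rintro _ ⟨s', hs', rfl⟩
    exact mul_le_mul (Real.exp_le_exp.2 (by nlinarith [hs'.2])) (hM s' hs') (norm_nonneg _)
      (Real.exp_pos _).le
  have h := le_csSup hbdd ⟨s, hs, rfl⟩
  rw [← le_div_iff₀' (Real.exp_pos _)] at h
  rwa [neg_mul, Real.exp_neg, ← div_eq_mul_inv]

theorem opNorm_eq_norm_toEuclideanCLM {n : ℕ} (M : Matrix (Fin n) (Fin n) ℝ) :
    opNorm M = ‖Matrix.toEuclideanCLM (𝕜 := ℝ) M‖ := rfl

open scoped Matrix.Norms.L2Operator in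
theorem toEuclideanCLM_mexp {n : ℕ} (M : Matrix (Fin n) (Fin n) ℝ) (t : ℝ) :
    Matrix.toEuclideanCLM (𝕜 := ℝ) (mexp M t)
      = NormedSpace.exp (t • Matrix.toEuclideanCLM (𝕜 := ℝ) M) := by
  let : NormedAlgebra ℚ (Matrix (Fin n) (Fin n) ℝ) := .restrictScalars ℚ ℝ _
  have hcont : Continuous (Matrix.toEuclideanCLM (𝕜 := ℝ) (n := Fin n)) :=
    AddMonoidHomClass.continuous_of_bound _ 1 fun M => by
      rw [Matrix.l2_opNorm_toEuclideanCLM, one_mul]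
  rw [mexp, NormedSpace.map_exp _ hcont, map_smul]

theorem stmt_11_general (n : ℕ) (A C : Matrix (Fin n) (Fin n) ℝ)
    (r ε Θ lam : ℝ) (hε : 0 ≤ ε) (hεr : ε ≤ r) (hΘ : 0 < Θ)
    (hdecay : ∀ t : ℝ, 0 ≤ t → opNorm (mexp A t) ≤ Θ * Real.exp (-lam * t))
    (d q : ℝ → ℝ) (hd : Measurable d) (hd1 : ∀ t, 0 ≤ t → d t ∈ Set.Icc (-1 : ℝ) 1)
    (hq : Measurable q) (hq1 : ∀ t, 0 ≤ t → q t ∈ Set.Icc (-1 : ℝ) 1)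
    (x : ℝ → EuclideanSpace ℝ (Fin n))
    (hxc : ContinuousOn x (Set.Ici (-(r + ε))))
    (hxode : ∀ t : ℝ, 0 ≤ t →
      x t = x 0 + ∫ s in (0 : ℝ)..t,
        (mv A (x s) + q s • mv C (x (s - r - ε * d s) - x (s - r))))
    (v : ℝ → EuclideanSpace ℝ (Fin n))
    (hv : ∀ t : ℝ, 0 ≤ t → v t = x (t - r) - x (t - r - ε * d t)) :
    ∀ σ : ℝ, σ ∈ Set.Ioo 0 lam → ∀ t : ℝ, 0 ≤ t →
      sSup ((fun s => Real.exp (σ * s) * ‖x s‖) '' Set.Icc 0 t) ≤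
        Θ * ‖x 0‖ + Θ * opNorm C / (lam - σ) *
          sSup ((fun s => Real.exp (σ * s) * ‖v s‖) '' Set.Icc 0 t) := by
  intro σ hσ t ht
  set Ac := Matrix.toEuclideanCLM (𝕜 := ℝ) A
  set Cc := Matrix.toEuclideanCLM (𝕜 := ℝ) C
  set f : ℝ → EuclideanSpace ℝ (Fin n) := fun s => q s • Cc (x (s - r - ε * d s) - x (s - r))
  have hfv : ∀ s, 0 ≤ s → ‖f s‖ ≤ ‖Cc‖ * ‖v s‖ := fun s hs => by
    rw [norm_smul, hv s hs, ← norm_neg (x (s - r) - _), neg_sub]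
    exact (mul_le_of_le_one_left (norm_nonneg _) (abs_le.2 (hq1 s hs))).trans (Cc.le_opNorm _)
  obtain ⟨Mv, hMv⟩ := exists_bound_delayed_difference hε hεr hd1 hxc t
  replace hMv : ∀ s ∈ Icc 0 t, ‖v s‖ ≤ Mv := fun s hs => hv s hs.1 ▸ hMv s hs
  have hvS := fun s hs => norm_le_sSup_exp_mul_norm_mul_exp hσ.1.le hMv (s := s) hs
  set S := sSup ((fun s => Real.exp (σ * s) * ‖v s‖) '' Icc 0 t)
  have hS : 0 ≤ S := (norm_nonneg _).trans ((hvS 0 ⟨le_rfl, ht⟩).trans (by simp))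
  refine csSup_le ((nonempty_Icc.2 ht).image _) ?_
  rintro _ ⟨τ, hτ, rfl⟩
  have hτt : Ioc 0 τ ⊆ Icc 0 t := fun u hu => ⟨hu.1.le, hu.2.trans hτ.2⟩
  have hx := variation_of_constants Ac hτ.1 (g := f) (M := ‖Cc‖ * Mv)
    (hq.aestronglyMeasurable.smul (Cc.continuous.comp_aestronglyMeasurable
      (aestronglyMeasurable_delayed_difference hε hεr hd hd1 hxc τ)))
    (fun u hu => (hfv u hu.1.le).trans (by gcongr; exact hMv u (hτt hu)))
    (hxc.mono fun u hu => show -(r + ε) ≤ u by linarith [hu.1]) fun s hs => hxode s hs.1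
  have key := exp_mul_norm_exp_smul_add_integral_le Ac hΘ.le hσ.2 (by positivity) hτ.1
    (fun s hs => toEuclideanCLM_mexp A s ▸ hdecay s hs) (x 0) (K := ‖Cc‖ * S)
    fun u hu => (hfv u hu.1.le).trans (by rw [mul_assoc]; gcongr; exact hvS u (hτt hu))
  rw [← hx] at key
  rw [opNorm_eq_norm_toEuclideanCLM]
  exact key.trans_eq (by ring)

theorem stmt_11 (n : ℕ) (A C : Matrix (Fin n) (Fin n) ℝ)
    (r ε Θ lam : ℝ) (hε : 0 ≤ ε) (hεr : ε ≤ r) (hΘ : 0 < Θ) (hlam : 0 < lam)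
    (hdecay : ∀ t : ℝ, 0 ≤ t → opNorm (mexp A t) ≤ Θ * Real.exp (-lam * t))
    (d q : ℝ → ℝ) (hd : Measurable d) (hd1 : ∀ t, 0 ≤ t → d t ∈ Set.Icc (-1 : ℝ) 1)
    (hq : Measurable q) (hq1 : ∀ t, 0 ≤ t → q t ∈ Set.Icc (-1 : ℝ) 1)
    (x : ℝ → EuclideanSpace ℝ (Fin n))
    (hxc : ContinuousOn x (Set.Ici (-(r + ε))))
    (hxode : ∀ t : ℝ, 0 ≤ t →
      x t = x 0 + ∫ s in (0 : ℝ)..t,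
        (mv A (x s) + q s • mv C (x (s - r - ε * d s) - x (s - r))))
    (v : ℝ → EuclideanSpace ℝ (Fin n))
    (hv : ∀ t : ℝ, 0 ≤ t → v t = x (t - r) - x (t - r - ε * d t)) :
    ∀ σ : ℝ, σ ∈ Set.Ioo 0 lam → ∀ t : ℝ, 0 ≤ t →
      sSup ((fun s => Real.exp (σ * s) * ‖x s‖) '' Set.Icc 0 t) ≤
        Θ * ‖x 0‖ + Θ * opNorm C / (lam - σ) *
          sSup ((fun s => Real.exp (σ * s) * ‖v s‖) '' Set.Icc 0 t) :=
  stmt_11_general n A C r ε Θ lam hε hεr hΘ hdecay d q hd hd1 hq hq1 x hxc hxode v hv
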